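/- arXiv:1604.04766 — 3 statements merged into one kernel-verified Lean document; each statement's English description precedes it below -/
import Mathlib

section
/- For n ≥ 1 and k ≥ 3, the number of permutations π ∈ Sₙ with pexc(π) = k and π(1) = 1 equals the number of σ ∈ S_{n−1} with pexc(σ) = k and σ(1) = 1, plus (n−2) times the number of τ ∈ S_{n−2} with pexc(τ) = k−3. -/
open Equiv Finset Filter
open scoped Classical

noncomputable section

/-- Number of fixed points of a permutation. -/
def c1 {n : ℕ} (π : Equiv.Perm (Fin n)) : ℕ :=
  (Finset.univ.filter fun i => π i = i).card

/-- Number of cycles of length at least 2 of a permutation. -/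
def c2 {n : ℕ} (π : Equiv.Perm (Fin n)) : ℕ := π.cycleType.card

/-- The prefix exchange distance, given by the Akers–Krishnamurthy formula. -/
def pexc {n : ℕ} (π : Equiv.Perm (Fin n)) : ℕ :=
  n + c2 π - c1 π - (if ∀ i : Fin n, (i : ℕ) = 0 → π i = i then 0 else 2)

/-- Whitney numbers of the second kind for the star poset. -/
def W (n k : ℕ) : ℕ :=
  (Finset.univ.filter fun π : Equiv.Perm (Fin n) => pexc π = k).card

/-!
Since `n - c₁ π` is the size of the support, `pexc` only depends on the cycle type of `π` and on
whether the base point is fixed; so it makes sense with any base point `a` of any finite type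
(`pexcAt`), and it is invariant under relabelling and under restriction to a subtype.

Fix the first point `a` and the last point `b`. A permutation fixing both is a permutation of the
other `n - 1` points. If `π` fixes `a` but moves `b`, put `j = π b`: then `ρ = (b j) π` fixes `a`
and `b`, and removing `b` from its cycle lowers `#support + #cycles` by `1` (or by `3` when `(b j)`
is itself a cycle of `π`, which is exactly when `ρ` fixes `j`). Either way `pexc π` equals
`pexcAt j ρ + 3`, so `π ↦ (j, ρ)` identifies these permutations with pairs of a point `j` among
the `n - 2` middle points and a permutation of those points with `pexcAt j = k - 3`.
-/

namespace Equiv.Perm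

variable {α β : Type*} [DecidableEq α] [DecidableEq β]

theorem disjoint_swap_swap_mul {f : Perm α} {x : α} (hffx : f (f x) = x) :
    Disjoint (swap x (f x)) (swap x (f x) * f) := by
  intro y
  rcases eq_or_ne y x with rfl | hyx
  · exact Or.inr (by simp)
  rcases eq_or_ne y (f x) with rfl | hyf
  · exact Or.inr (by simp [hffx])
  exact Or.inl (swap_apply_of_ne_of_ne hyx hyf)

variable [Fintype α] [Fintype β]

theorem card_cycleType_swap_mul {f : Perm α} {x : α} (hffx : f (f x) ≠ x) :
    (swap x (f x) * f).cycleType.card = f.cycleType.card := by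
  have hx : f x ≠ x := fun h => hffx (by rw [h, h])
  -- Only the cycle `c` through `x` is affected, and `IsCycle.swap_mul` keeps it a cycle.
  set c := f.cycleOf x
  have hcx : c x = f x := cycleOf_apply_self f x
  have hc : c.IsCycle := isCycle_cycleOf f hx
  have hcc : c (c x) ≠ x := by
    rwa [hcx, ← zpow_one f, cycleOf_apply_apply_zpow_self]
  have hdisj : Disjoint c (f * c⁻¹) :=
    (disjoint_mul_inv_of_mem_cycleFactorsFinset
      (cycleOf_mem_cycleFactorsFinset_iff.mpr (mem_support.mpr hx))).symm
  have hf : f = c * (f * c⁻¹) := by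
    rw [hdisj.commute.eq, inv_mul_cancel_right]
  have hdisj' : Disjoint (swap x (c x) * c) (f * c⁻¹) :=
    hdisj.mono (by rw [support_swap_mul_eq c x hcc]; exact sdiff_subset) le_rfl
  have hsplit : swap x (f x) * f = (swap x (c x) * c) * (f * c⁻¹) := by
    rw [hcx, mul_assoc, ← hf]
  rw [hsplit, hdisj'.cycleType_mul, Multiset.card_add,
    card_cycleType_eq_one.mpr (hc.swap_mul (by rwa [hcx]) hcc)]
  conv_rhs => rw [hf, hdisj.cycleType_mul, Multiset.card_add, card_cycleType_eq_one.mpr hc]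

theorem cycleType_permCongr (e : α ≃ β) (σ : Perm α) :
    (e.permCongr σ).cycleType = σ.cycleType := by
  have : e.permCongr σ = σ.extendDomain (e.trans (subtypeUnivEquiv fun _ => trivial).symm) := by
    ext x
    rw [extendDomain_apply_subtype _ _ trivial]
    rfl
  rw [this, cycleType_extendDomain]

theorem card_filter_ofSubtype (p : α → Prop) [DecidablePred p] (Q : Perm α → Prop)
    [DecidablePred Q] :
    #{ρ : Perm α | (∀ x, ¬p x → ρ x = x) ∧ Q ρ} = #{τ : Perm (Subtype p) | Q (ofSubtype τ)} := by
  refine (card_bij (fun τ _ => ofSubtype τ) ?_ (fun _ _ _ _ h => ofSubtype_injective h) ?_).symm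
  · intro τ hτ
    simp only [mem_filter, mem_univ, true_and] at hτ ⊢
    exact ⟨fun x hx => ofSubtype_apply_of_not_mem τ hx, hτ⟩
  · intro ρ hρ
    simp only [mem_filter, mem_univ, true_and] at hρ
    have hρ' : ofSubtype ((Perm.subtypeEquivSubtypePerm p).symm ⟨ρ, hρ.1⟩) = ρ :=
      congrArg Subtype.val ((Perm.subtypeEquivSubtypePerm p).apply_symm_apply ⟨ρ, hρ.1⟩)
    exact ⟨_, by rw [mem_filter, hρ']; exact ⟨mem_univ _, hρ.2⟩, hρ'⟩

end Equiv.Perm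

open Equiv.Perm

theorem exists_equiv_fin_apply_eq_zero {β : Type*} [Fintype β] (j : β) :
    ∃ e : β ≃ Fin (Fintype.card β), e j = ⟨0, Fintype.card_pos_iff.2 ⟨j⟩⟩ :=
  ⟨(Fintype.equivFin β).trans (swap (Fintype.equivFin β j) _), swap_apply_left _ _⟩

section pexcAt

variable {α β : Type*} [Fintype α] [DecidableEq α] [Fintype β] [DecidableEq β]

theorem forall_val_eq_zero_imp_iff {N : ℕ} (hN : 0 < N) (σ : Perm (Fin N)) :
    (∀ i : Fin N, (i : ℕ) = 0 → σ i = i) ↔ σ ⟨0, hN⟩ = ⟨0, hN⟩ :=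
  ⟨fun h => h _ rfl, fun h i hi => by rwa [show i = ⟨0, hN⟩ from Fin.ext hi]⟩

theorem card_subtype_ne_and_ne {a b : α} (hab : a ≠ b) :
    Fintype.card {x // x ≠ a ∧ x ≠ b} = Fintype.card α - 2 := by
  rw [Fintype.card_subtype, show ({x | x ≠ a ∧ x ≠ b} : Finset α) = univ \ {a, b} by ext; simp,
    card_sdiff_of_subset (subset_univ _), card_pair hab, card_univ]

-- `pexc` with `a` in place of the first position, using `n - c₁ π = #π.support`.
def pexcAt (a : α) (π : Perm α) : ℕ :=
  #π.support + π.cycleType.card - if π a = a then 0 else 2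

theorem pexc_eq_pexcAt {N : ℕ} (hN : 0 < N) (π : Perm (Fin N)) :
    pexc π = pexcAt ⟨0, hN⟩ π := by
  have hc1 : c1 π + #π.support = N :=
    (card_filter_add_card_filter_not (s := univ) fun i => π i = i).trans (by simp)
  rw [pexc, pexcAt, c2, if_congr (forall_val_eq_zero_imp_iff hN π) rfl rfl]
  omega

theorem pexcAt_eq_sum_cycleType (a : α) (π : Perm α) :
    pexcAt a π = π.cycleType.sum + π.cycleType.card - if π a = a then 0 else 2 := by
  rw [pexcAt, sum_cycleType]

theorem pexcAt_permCongr (e : α ≃ β) (a : α) (π : Perm α) :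
    pexcAt (e a) (e.permCongr π) = pexcAt a π := by
  simp only [pexcAt_eq_sum_cycleType, cycleType_permCongr, permCongr_apply, symm_apply_apply,
    EmbeddingLike.apply_eq_iff_eq]

theorem pexcAt_ofSubtype {p : α → Prop} [DecidablePred p] {a : α} (ha : p a)
    (τ : Perm (Subtype p)) : pexcAt a (ofSubtype τ) = pexcAt ⟨a, ha⟩ τ := by
  simp only [pexcAt_eq_sum_cycleType, cycleType_ofSubtype, ← Subtype.coe_inj,
    ← ofSubtype_apply_coe]

theorem pexcAt_swap_mul {π : Perm α} {a b : α} (ha : π a = a) (hb : π b ≠ b) :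
    pexcAt (π b) (swap b (π b) * π) + 3 = pexcAt a π := by
  have hjb : π (π b) ≠ π b := fun h => hb (π.injective h)
  rw [pexcAt, pexcAt, if_pos ha]
  by_cases hππ : π (π b) = b
  · have hρ : (swap b (π b) * π) (π b) = π b := by simp [hππ]
    have hd := disjoint_swap_swap_mul hππ
    conv_rhs => rw [← Equiv.swap_mul_self_mul b (π b) π, hd.card_support_mul,
      hd.cycleType_mul, Multiset.card_add, card_support_swap hb.symm,
      card_cycleType_eq_one.mpr (isCycle_swap hb.symm)]
    rw [if_pos hρ]
    omega
  · have hρ : (swap b (π b) * π) (π b) ≠ π b := by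
      rw [mul_apply, swap_apply_of_ne_of_ne hππ hjb]
      exact hjb
    have hsupp : #(swap b (π b) * π).support + 1 = #π.support := by
      rw [support_swap_mul_eq π b hππ, card_sdiff_of_subset (by simpa using hb), card_singleton]
      have : 1 ≤ #π.support := card_pos.mpr ⟨b, mem_support.mpr hb⟩
      omega
    have h2 := two_le_card_support_of_ne_one (f := swap b (π b) * π)
      fun h => hρ (by rw [h, one_apply])
    rw [if_neg hρ, card_cycleType_swap_mul hππ]
    omega

theorem card_pexcAt_eq_W (j : β) (k : ℕ) :
    #{τ : Perm β | pexcAt j τ = k} = W (Fintype.card β) k := by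
  obtain ⟨e, he⟩ := exists_equiv_fin_apply_eq_zero j
  refine card_equiv e.permCongr fun τ => ?_
  simp [pexc_eq_pexcAt (Fintype.card_pos_iff.2 ⟨j⟩), ← he, pexcAt_permCongr]

theorem card_pexcAt_fix_eq_card_fin (j : β) (k : ℕ) :
    #{σ : Perm β | pexcAt j σ = k ∧ σ j = j} =
      #{σ : Perm (Fin (Fintype.card β)) | pexc σ = k ∧
        ∀ i : Fin (Fintype.card β), (i : ℕ) = 0 → σ i = i} := by
  obtain ⟨e, he⟩ := exists_equiv_fin_apply_eq_zero j
  refine card_equiv e.permCongr fun σ => ?_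
  simp [pexc_eq_pexcAt (Fintype.card_pos_iff.2 ⟨j⟩),
    forall_val_eq_zero_imp_iff (Fintype.card_pos_iff.2 ⟨j⟩), ← he, pexcAt_permCongr]

theorem card_pexcAt_fix_fix {a b : α} (hab : a ≠ b) (k : ℕ) :
    #{π : Perm α | (pexcAt a π = k ∧ π a = a) ∧ π b = b} =
      #{σ : Perm {x // x ≠ b} | pexcAt ⟨a, hab⟩ σ = k ∧ σ ⟨a, hab⟩ = ⟨a, hab⟩} := by
  calc _ = #{π : Perm α | (∀ x, ¬x ≠ b → π x = x) ∧ (pexcAt a π = k ∧ π a = a)} := by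
        simp only [ne_eq, not_not, forall_eq, and_comm]
    _ = _ := by
        rw [card_filter_ofSubtype]
        simp only [pexcAt_ofSubtype (p := (· ≠ b)) hab, ofSubtype_apply_of_mem (p := (· ≠ b)) _ hab,
          Subtype.ext_iff]

theorem card_pexcAt_fix_apply {a b : α} (hab : a ≠ b) (j : {x // x ≠ a ∧ x ≠ b}) {k : ℕ}
    (hk : 3 ≤ k) :
    #{π : Perm α | (pexcAt a π = k ∧ π a = a) ∧ π b = j} =
      #{τ : Perm {x // x ≠ a ∧ x ≠ b} | pexcAt j τ = k - 3} := by
  obtain ⟨j, hja, hjb⟩ := j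
  have hfixes : ∀ π : Perm α,
      π a = a ∧ π b = j ↔ (swap b j * π) a = a ∧ (swap b j * π) b = b := by
    intro π
    rw [mul_apply, mul_apply, swap_apply_eq_iff, swap_apply_eq_iff, swap_apply_left,
      swap_apply_of_ne_of_ne hab hja.symm]
  have hpexc : ∀ π : Perm α, π a = a → π b = j → pexcAt j (swap b j * π) + 3 = pexcAt a π := by
    rintro π hπa rfl
    exact pexcAt_swap_mul hπa hjb
  calc _ = #{ρ : Perm α | (∀ x, ¬(x ≠ a ∧ x ≠ b) → ρ x = x) ∧ pexcAt j ρ = k - 3} := by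
        refine card_equiv (Equiv.mulLeft (swap b j)) fun π => ?_
        simp only [mem_filter, mem_univ, true_and, Equiv.coe_mulLeft, ne_eq, not_and_or, not_not,
          or_imp, forall_and, forall_eq]
        rw [← hfixes]
        constructor
        · rintro ⟨⟨hπk, hπa⟩, hπb⟩
          have := hpexc π hπa hπb
          exact ⟨⟨hπa, hπb⟩, by omega⟩
        · rintro ⟨⟨hπa, hπb⟩, hρk⟩
          have := hpexc π hπa hπb
          exact ⟨⟨by omega, hπa⟩, hπb⟩
    _ = _ := by
        rw [card_filter_ofSubtype]
        simp only [pexcAt_ofSubtype (p := fun x => x ≠ a ∧ x ≠ b) ⟨hja, hjb⟩]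

theorem card_pexcAt_fix_move {a b : α} (hab : a ≠ b) {k : ℕ} (hk : 3 ≤ k) :
    #{π : Perm α | (pexcAt a π = k ∧ π a = a) ∧ ¬π b = b} =
      Fintype.card {x // x ≠ a ∧ x ≠ b} * W (Fintype.card {x // x ≠ a ∧ x ≠ b}) (k - 3) := by
  rw [card_eq_sum_card_fiberwise (f := fun π => π b) (t := {x | x ≠ a ∧ x ≠ b}) fun π hπ => ?_]
  swap
  · simp only [coe_filter, mem_univ, true_and, Set.mem_ofPred_eq] at hπ ⊢
    exact ⟨fun h => hab (π.injective (h.trans hπ.1.2.symm)).symm, hπ.2⟩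
  nth_rw 1 [Fintype.card_subtype]
  rw [← smul_eq_mul, ← sum_const]
  refine sum_congr rfl fun j hj => ?_
  simp only [mem_filter, mem_univ, true_and] at hj
  rw [filter_filter, ← card_pexcAt_eq_W ⟨j, hj⟩,
    ← card_pexcAt_fix_apply hab ⟨j, hj⟩ hk]
  congr 1
  exact filter_congr fun π _ =>
    ⟨fun h => ⟨h.1.1, h.2⟩, fun h => ⟨⟨h.1, fun hb => hj.2 (h.2.symm.trans hb)⟩, h.2⟩⟩

end pexcAt

theorem pexc_one (N : ℕ) : pexc (1 : Perm (Fin N)) = 0 := by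
  simp [pexc, c1, c2]

theorem stmt7 (n k : ℕ) (hn : 0 < n) (hk : 3 ≤ k) :
    (Finset.univ.filter fun π : Equiv.Perm (Fin n) =>
        pexc π = k ∧ π ⟨0, hn⟩ = ⟨0, hn⟩).card =
      (Finset.univ.filter fun σ : Equiv.Perm (Fin (n - 1)) =>
        pexc σ = k ∧ ∀ i : Fin (n - 1), (i : ℕ) = 0 → σ i = i).card
      + (n - 2) * W (n - 2) (k - 3) := by
  rcases n with _ | _ | m
  · omega
  · have hk0 : ∀ N ≤ 1, ∀ σ : Perm (Fin N), pexc σ ≠ k := fun N hN σ => by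
      have : Subsingleton (Fin N) := Fin.subsingleton_iff_le_one.mpr hN
      rw [Subsingleton.elim σ 1, pexc_one]
      omega
    simp [hk0 1 le_rfl, hk0 0 zero_le_one]
  · set a : Fin (m + 2) := ⟨0, hn⟩
    set b := Fin.last (m + 1)
    have hab : a ≠ b := Fin.ne_of_lt (Fin.last_pos)
    rw [← card_filter_add_card_filter_not (fun π : Perm (Fin (m + 2)) => π b = b),
      filter_filter, filter_filter]
    simp only [pexc_eq_pexcAt hn]
    have hcard : Fintype.card {x // x ≠ b} = m + 1 + 1 - 1 := by
      simp [Fintype.card_subtype_compl]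
    rw [card_pexcAt_fix_fix hab, card_pexcAt_fix_move hab hk,
      card_pexcAt_fix_eq_card_fin, card_subtype_ne_and_ne hab, hcard, Fintype.card_fin]
end
end

section
/- Every permutation π of {1,…,n+k+1} with prefix exchange distance k fixes at least one element among n+1, n+2, …, n+k+1 (for n ≥ 1 and k ≥ 0). -/
open Equiv Finset Filter
open scoped Classical

noncomputable section

/-! Writing `s` for the number of points moved by `π`, we have `n - c₁ = s`, so
`pexc π = s + c₂` when `π` fixes position `0` and `pexc π = s + c₂ - 2 ≥ s - 1` otherwise
(then `π ≠ 1`, so `c₂ ≥ 1`). Either way `pexc π` bounds the number of moved points other than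
`0`. If the `k + 1` positions `n, …, n + k` were all moved, this number would be at least
`k + 1 > pexc π`. -/

theorem c1_add_card_support {n : ℕ} (π : Perm (Fin n)) : c1 π + #π.support = n := by
  have hc1 : c1 π = #π.supportᶜ := by
    unfold c1
    congr 1
    ext i
    simp
  rw [hc1, card_compl_add_card, Fintype.card_fin]

theorem c2_pos_of_ne_one {n : ℕ} {π : Perm (Fin n)} (hπ : π ≠ 1) : 0 < c2 π :=
  Perm.card_cycleType_pos.mpr hπ

theorem card_support_filter_ne_zero_le_pexc {n : ℕ} (π : Perm (Fin n)) :
    #(π.support.filter fun i : Fin n => (i : ℕ) ≠ 0) ≤ pexc π := by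
  have hc1 := c1_add_card_support π
  unfold pexc
  split_ifs with hfix
  · have := card_filter_le π.support (fun i : Fin n => (i : ℕ) ≠ 0)
    omega
  · push Not at hfix
    obtain ⟨i₀, hi₀, hmoved⟩ := hfix
    have hc2 : 0 < c2 π := c2_pos_of_ne_one fun h1 => hmoved (by simp [h1])
    have hlt : #(π.support.filter fun i : Fin n => (i : ℕ) ≠ 0) < #π.support :=
      card_lt_card (filter_ssubset.mpr ⟨i₀, Perm.mem_support.mpr hmoved, not_not.mpr hi₀⟩)
    omega

theorem stmt9 (n k : ℕ) (hn : 1 ≤ n) (π : Equiv.Perm (Fin (n + k + 1)))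
    (h : pexc π = k) : ∃ i : Fin (n + k + 1), n ≤ (i : ℕ) ∧ π i = i := by
  by_contra! hmoved
  have htail : Ici (⟨n, by omega⟩ : Fin (n + k + 1)) ⊆
      π.support.filter fun i : Fin (n + k + 1) => (i : ℕ) ≠ 0 := by
    intro i hi
    have hle : n ≤ (i : ℕ) := Fin.le_def.mp (mem_Ici.mp hi)
    exact mem_filter.mpr ⟨Perm.mem_support.mpr (hmoved i hle), by omega⟩
  have hcard := (card_le_card htail).trans (card_support_filter_ne_zero_le_pexc π)
  rw [Fin.card_Ici] at hcard
  simp only at hcard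
  omega
end
end

section
/- For every n ≥ 1 and every x, Σ_k W_{n,k}·x^k = Σ_{i=0}^{n−1} C(n−1, i) · (1−x²)^{n−1−i} · x^i · Π_{j=1}^{i} (x+j), where W_{n,k} is the number of permutations in Sₙ at prefix exchange distance k. -/
/-!
Write `cyc π` for the number of cycles of `π`, fixed points included, and `F π` for the set of
fixed points of `π` other than `0`. The defining formula of `pexc` rearranges to
`pexc π + 2 |F π| = (n - 1) + (cyc π - 1)`. Writing the weight of each point of `F π` as
`1 = (1 - x²) + x²` and expanding, `x ^ pexc π` becomes a sum over `T ⊆ F π` of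
`(1 - x²) ^ |T| * x ^ (n - 1 - |T|) * x ^ (cyc σ - 1)`, where `σ` is the restriction of `π` to the
complement of `T`. After exchanging the two sums, the permutations fixing `T` pointwise are the
permutations of its complement, and `∑_{σ ∈ S_m} x ^ (cyc σ - 1) = (x + 1) ⋯ (x + m - 1)`: a new
point is either a new fixed point, or is inserted after one of the `m` old points in its cycle,
which keeps the number of cycles. Counting the sets `T` by size gives the binomial coefficients.
-/

open Equiv Finset Filter
open scoped Classical

noncomputable section

namespace Equiv.Perm

variable {α β : Type*} [Fintype α] [DecidableEq α] [Fintype β] [DecidableEq β]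

def numCycles (σ : Perm α) : ℕ := σ.cycleType.card + #{a | σ a = a}

theorem card_fixed_add_card_support (σ : Perm α) :
    #{a | σ a = a} + #σ.support = Fintype.card α := by
  rw [support, Finset.card_filter_add_card_filter_not, card_univ]

theorem numCycles_add_card_support (σ : Perm α) :
    numCycles σ + #σ.support = σ.cycleType.card + Fintype.card α := by
  rw [numCycles, add_assoc, card_fixed_add_card_support]

theorem two_mul_card_cycleType_le (σ : Perm α) : 2 * σ.cycleType.card ≤ #σ.support := by
  rw [← sum_cycleType, mul_comm, ← smul_eq_mul]
  exact Multiset.card_nsmul_le_sum fun _ => two_le_of_mem_cycleType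

theorem card_fixed_eq_card_fixed_erase_add (σ : Perm α) (z : α) :
    #{a | σ a = a} = #{a ∈ univ.erase z | σ a = a} + if σ z = z then 1 else 0 := by
  rw [Finset.filter_erase]
  split_ifs with hz
  · rw [card_erase_add_one (by simpa using hz)]
  · rw [erase_eq_of_notMem (by simpa using hz), add_zero]

theorem numCycles_extendDomain {p : β → Prop} [DecidablePred p] (e : α ≃ Subtype p)
    (σ : Perm α) : numCycles (σ.extendDomain e) = numCycles σ + #{b | ¬p b} := by
  have hσ := numCycles_add_card_support σ
  have hext := numCycles_add_card_support (σ.extendDomain e)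
  have hcard : Fintype.card α + #{b | ¬p b} = Fintype.card β := by
    rw [Fintype.card_congr e, Fintype.card_subtype, Finset.card_filter_add_card_filter_not,
      card_univ]
  rw [cycleType_extendDomain, card_support_extend_domain] at hext
  omega

theorem numCycles_optionCongr (σ : Perm α) :
    numCycles (optionCongr σ : Perm (Option α)) = numCycles σ + 1 := by
  have h : (optionCongr σ : Perm (Option α)) = σ.extendDomain (optionIsSomeEquiv α).symm := by
    refine Equiv.ext fun o => ?_
    cases o with
    | none => rw [extendDomain_apply_not_subtype] <;> simp
    | some a =>
      exact (extendDomain_apply_subtype σ (optionIsSomeEquiv α).symm (b := some a) rfl).symm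
  rw [h, numCycles_extendDomain, Finset.card_eq_one.2 ⟨none, ?_⟩]
  ext (_ | a) <;> simp

theorem numCycles_permCongr (e : α ≃ β) (σ : Perm α) :
    numCycles (e.permCongr σ) = numCycles σ := by
  have h : e.permCongr σ = σ.extendDomain (e.trans (subtypeUnivEquiv fun _ => trivial).symm) := by
    ext b
    rw [extendDomain_apply_subtype _ _ (p := fun _ : β => True) trivial]
    simp [permCongr_apply, subtypeUnivEquiv]
  rw [h, numCycles_extendDomain]
  simp

theorem numCycles_ofSubtype {p : α → Prop} [DecidablePred p] (σ : Perm (Subtype p)) :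
    numCycles (ofSubtype σ) = numCycles σ + #{a | ¬p a} :=
  numCycles_extendDomain (Equiv.refl _) σ

theorem one_le_numCycles [Nonempty α] (σ : Perm α) : 1 ≤ numCycles σ := by
  rcases eq_or_ne σ 1 with rfl | hσ
  · obtain ⟨a⟩ := ‹Nonempty α›
    exact le_add_left (card_pos.2 ⟨a, by simp⟩)
  · exact le_add_right (card_cycleType_pos.2 hσ)

theorem numCycles_swap_mul_self {f : Perm α} {x : α} (hx : f x ≠ x) :
    numCycles (swap x (f x) * f) = numCycles f + 1 := by
  set c := f.cycleOf x
  set g := f * c⁻¹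
  have hc : c.IsCycle := isCycle_cycleOf f hx
  have hcx : c x = f x := cycleOf_apply_self f x
  have hgc : Disjoint g c := disjoint_mul_inv_of_mem_cycleFactorsFinset
    (cycleOf_mem_cycleFactorsFinset_iff.2 (mem_support.2 hx))
  have hf : f = c * g := by rw [← hgc.commute.eq, inv_mul_cancel_right]
  set y := f x
  set κ := swap x y * c
  have hκg : Disjoint κ g :=
    hgc.symm.mono (fun z hz => (mem_support_swap_mul_imp_mem_support_ne (x := x)
      (by rwa [hcx])).1) le_rfl
  -- removing `x` from the cycle `c` leaves a cycle, or nothing at all when `c` is a transposition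
  have hκ : κ.cycleType.card + #c.support = #κ.support + 2 := by
    by_cases hcy : c y = x
    · have hswap : c = swap x y := hcx ▸ hc.eq_swap_of_apply_apply_eq_self (hcx ▸ hx) (hcx ▸ hcy)
      have hκ1 : κ = 1 := by
        change swap x y * c = 1
        rw [hswap, swap_mul_self]
      rw [hκ1, hswap, card_support_swap hx.symm]
      simp
    · have hxc : x ∈ c.support := mem_support.2 (hcx ▸ hx)
      have hκc : κ.IsCycle := by
        have h := hc.swap_mul (hcx ▸ hx) (hcx ▸ hcy)
        rwa [hcx] at h
      have hκs : κ.support = c.support \ {x} := by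
        simpa only [hcx] using support_swap_mul_eq c x (hcx ▸ hcy)
      rw [hκc.cycleType, hκs, Finset.card_sdiff_of_subset (Finset.singleton_subset_iff.2 hxc)]
      have := Finset.card_pos.2 ⟨x, hxc⟩
      simp only [Multiset.card_singleton, Finset.card_singleton]
      omega
  have hnew := numCycles_add_card_support (κ * g)
  rw [hκg.cycleType_mul, hκg.card_support_mul, Multiset.card_add] at hnew
  have hold := numCycles_add_card_support f
  have hct : f.cycleType.card = 1 + g.cycleType.card := by
    rw [hf, hgc.symm.cycleType_mul, Multiset.card_add, hc.cycleType, Multiset.card_singleton]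
  have hsupp : #f.support = #c.support + #g.support := by
    rw [hf, hgc.symm.card_support_mul]
  have hsplit : swap x y * f = κ * g := by
    conv_lhs => rw [hf]
    rw [mul_assoc]
  rw [hsplit]
  omega

-- `swap none (some a) * optionCongr σ` is `σ` with `none` inserted just before `a` in its cycle.
theorem numCycles_swap_mul_optionCongr (a : α) (σ : Perm α) :
    numCycles (swap none (some a) * optionCongr σ) = numCycles σ := by
  set τ : Perm (Option α) := swap none (some a) * optionCongr σ
  have hτ : τ none = some a := by simp [τ]
  have h := numCycles_swap_mul_self (f := τ) (x := none) (by simp [hτ])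
  rw [hτ, ← mul_assoc, swap_mul_self, one_mul, numCycles_optionCongr] at h
  omega

section Sums

variable {M : Type*} [AddCommMonoid M]

theorem sum_comp_numCycles_congr (e : α ≃ β) (g : ℕ → M) :
    ∑ σ : Perm α, g (numCycles σ) = ∑ τ : Perm β, g (numCycles τ) :=
  Fintype.sum_equiv e.permCongr _ _ fun σ => by rw [numCycles_permCongr]

theorem sum_comp_numCycles_option (g : ℕ → M) :
    ∑ τ : Perm (Option α), g (numCycles τ) =
      ∑ σ : Perm α, g (numCycles σ + 1) + Fintype.card α • ∑ σ : Perm α, g (numCycles σ) := by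
  rw [← decomposeOption.symm.sum_comp, Fintype.sum_prod_type, Fintype.sum_option]
  congr 1
  · simp only [decomposeOption_symm_apply, swap_self, ← one_def, one_mul, numCycles_optionCongr]
  · simp only [decomposeOption_symm_apply, numCycles_swap_mul_optionCongr, sum_const, card_univ]

theorem sum_comp_numCycles_fixing (T : Finset α) (g : ℕ → M) :
    ∑ π with ∀ a ∈ T, π a = a, g (numCycles π) =
      ∑ σ : Perm {a // a ∉ T}, g (numCycles σ + #T) := by
  calc ∑ π with ∀ a ∈ T, π a = a, g (numCycles π)
      = ∑ π : {π : Perm α // ∀ a, ¬a ∉ T → π a = a}, g (numCycles π.1) :=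
        Finset.sum_subtype _ (by simp) _
    _ = ∑ σ : Perm {a // a ∉ T}, g (numCycles (ofSubtype σ)) :=
        (Fintype.sum_equiv (Perm.subtypeEquivSubtypePerm _) _ _ fun _ => rfl).symm
    _ = _ := by simp [numCycles_ofSubtype]

end Sums

theorem sum_pow_numCycles_sub_one {R : Type*} [CommSemiring R] (x : R) :
    ∑ σ : Perm α, x ^ (numCycles σ - 1) = ∏ j ∈ Icc 1 (Fintype.card α - 1), (x + j) := by
  rw [sum_comp_numCycles_congr (Fintype.equivFin α) fun k => x ^ (k - 1)]
  generalize Fintype.card α = n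
  induction n with
  | zero => simp [numCycles]
  | succ n ih =>
    refine (sum_comp_numCycles_congr (finSuccEquiv n) fun k => x ^ (k - 1)).trans ?_
    rw [sum_comp_numCycles_option fun k => x ^ (k - 1)]
    rcases n with _ | n
    · simp [numCycles]
    · have h (σ : Perm (Fin (n + 1))) : x ^ numCycles σ = x * x ^ (numCycles σ - 1) := by
        rw [← pow_succ', Nat.sub_add_cancel (one_le_numCycles σ)]
      simp only [Nat.add_sub_cancel, h, ← mul_sum, ih, nsmul_eq_mul, Fintype.card_fin,
        prod_Icc_succ_top (Nat.le_add_left 1 n)]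
      push_cast
      ring

theorem sum_pow_eq_of_add_two_mul_card_fixed {R : Type*} [CommRing R] (z : α) {e : Perm α → ℕ}
    (he : ∀ π, e π + 2 * #{a ∈ univ.erase z | π a = a} + 2 = Fintype.card α + numCycles π)
    (x : R) :
    ∑ π, x ^ e π = ∑ i ∈ range (Fintype.card α), ((Fintype.card α - 1).choose i : R) *
      (1 - x ^ 2) ^ (Fintype.card α - 1 - i) * x ^ i * ∏ j ∈ Icc 1 i, (x + j) := by
  have hn : 1 ≤ Fintype.card α := Fintype.card_pos_iff.2 ⟨z⟩
  generalize hαn : Fintype.card α = n at he hn ⊢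
  set F := fun π : Perm α => {a ∈ univ.erase z | π a = a}
  set P := fun i : ℕ => x ^ i * ∏ j ∈ Icc 1 i, (x + j)
  -- each fixed point `a ≠ z` contributes `1 = (1 - x²) + x²`
  have hexpand (π : Perm α) :
      x ^ e π = ∑ T ∈ (F π).powerset, (1 - x ^ 2) ^ #T * x ^ (e π + 2 * (#(F π) - #T)) := by
    calc x ^ e π = x ^ e π * ((1 - x ^ 2) + x ^ 2) ^ #(F π) := by simp
      _ = _ := by
        rw [← sum_pow_mul_eq_add_pow, mul_sum]
        refine sum_congr rfl fun T _ => ?_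
        rw [pow_add, pow_mul]
        ring
  have hinner (T : Finset α) (hT : T ∈ (univ.erase z).powerset) :
      ∑ π with ∀ a ∈ T, π a = a, (1 - x ^ 2) ^ #T * x ^ (e π + 2 * (#(F π) - #T)) =
        (1 - x ^ 2) ^ #T * P (n - 1 - #T) := by
    have hTz : T ⊆ univ.erase z := mem_powerset.1 hT
    have hzT : z ∉ T := fun h => by simpa using hTz h
    have hTn : #T ≤ n - 1 := by simpa [hαn] using card_le_card hTz
    have hexp_fixing (π : Perm α) (hπ : π ∈ univ.filter fun π : Perm α => ∀ a ∈ T, π a = a) :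
        e π + 2 * (#(F π) - #T) = n + numCycles π - 2 - 2 * #T := by
      have hTF : #T ≤ #(F π) :=
        card_le_card fun a ha => mem_filter.2 ⟨hTz ha, (mem_filter.1 hπ).2 a ha⟩
      have := he π
      change e π + 2 * #(F π) + 2 = n + numCycles π at this
      omega
    have : Nonempty {a // a ∉ T} := ⟨⟨z, hzT⟩⟩
    have hexp_split (σ : Perm {a // a ∉ T}) :
        n + (numCycles σ + #T) - 2 - 2 * #T = (n - 1 - #T) + (numCycles σ - 1) := by
      have := one_le_numCycles σ
      omega
    have hcard : Fintype.card {a // a ∉ T} - 1 = n - 1 - #T := by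
      rw [Fintype.card_subtype_compl, Fintype.card_coe, hαn]
      omega
    rw [sum_congr rfl fun π hπ => by rw [hexp_fixing π hπ], ← mul_sum,
      sum_comp_numCycles_fixing T fun k => x ^ (n + k - 2 - 2 * #T)]
    simp only [hexp_split, pow_add, ← mul_sum, sum_pow_numCycles_sub_one, hcard, P]
  calc ∑ π, x ^ e π
      = ∑ T ∈ (univ.erase z).powerset, ∑ π with ∀ a ∈ T, π a = a,
          (1 - x ^ 2) ^ #T * x ^ (e π + 2 * (#(F π) - #T)) := by
        simp only [hexpand]
        refine sum_comm' fun π T => ?_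
        simp only [mem_univ, true_and, mem_powerset, mem_filter, F, subset_iff]
        grind
    _ = ∑ T ∈ (univ.erase z).powerset, (1 - x ^ 2) ^ #T * P (n - 1 - #T) := sum_congr rfl hinner
    _ = ∑ t ∈ range n, ((n - 1).choose t : R) * ((1 - x ^ 2) ^ t * P (n - 1 - t)) := by
        rw [sum_powerset_apply_card fun t => (1 - x ^ 2) ^ t * P (n - 1 - t),
          card_erase_of_mem (mem_univ z), card_univ, hαn, Nat.sub_add_cancel hn]
        simp only [nsmul_eq_mul]
    _ = _ := by
        rw [← sum_range_reflect]
        refine sum_congr rfl fun i hi => ?_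
        have hi : i < n := mem_range.1 hi
        rw [Nat.choose_symm (by omega), show n - 1 - (n - 1 - i) = i by omega]
        simp only [P]
        ring

end Equiv.Perm

open Equiv.Perm

theorem pexc_add_two_mul_card_fixed {m : ℕ} (π : Perm (Fin (m + 1))) :
    pexc π + 2 * #{a ∈ univ.erase 0 | π a = a} + 2 = m + 1 + numCycles π := by
  have hcond : (∀ i : Fin (m + 1), (i : ℕ) = 0 → π i = i) ↔ π 0 = 0 :=
    ⟨fun h => h 0 rfl, fun h i hi => (Fin.ext hi : i = 0) ▸ h⟩
  have hfix := card_fixed_eq_card_fixed_erase_add π 0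
  have hsupp := card_fixed_add_card_support π
  rw [Fintype.card_fin] at hsupp
  rw [pexc, c1, c2, numCycles, if_congr hcond rfl rfl]
  split_ifs at hfix ⊢ with h0
  · omega
  · have := two_le_card_support_of_ne_one (f := π) fun h1 => h0 (by rw [h1, one_apply])
    omega

theorem pexc_le {m : ℕ} (π : Perm (Fin (m + 1))) : pexc π ≤ 3 * m / 2 := by
  have hpexc := pexc_add_two_mul_card_fixed π
  have hfix := card_fixed_eq_card_fixed_erase_add π 0
  have hsupp := card_fixed_add_card_support π
  have hct := two_mul_card_cycleType_le π
  rw [Fintype.card_fin] at hsupp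
  rw [numCycles] at hpexc
  split_ifs at hfix <;> omega

theorem sum_W_mul_pow {R : Type*} [CommSemiring R] {n K : ℕ}
    (hK : ∀ π : Perm (Fin n), pexc π < K) (x : R) :
    ∑ k ∈ range K, (W n k : R) * x ^ k = ∑ π : Perm (Fin n), x ^ pexc π := by
  rw [← sum_fiberwise_of_maps_to (g := pexc) fun π _ => mem_range.2 (hK π)]
  refine sum_congr rfl fun k _ => ?_
  rw [sum_congr rfl fun π hπ => by rw [(mem_filter.1 hπ).2], sum_const, nsmul_eq_mul, W]

theorem stmt10 (n : ℕ) (hn : 1 ≤ n) (x : ℝ) :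
    ∑ k ∈ Finset.range (3 * (n - 1) / 2 + 1), (W n k : ℝ) * x ^ k =
      ∑ i ∈ Finset.range n, ((n - 1).choose i : ℝ) * (1 - x ^ 2) ^ (n - 1 - i)
        * x ^ i * ∏ j ∈ Finset.Icc 1 i, (x + j) := by
  obtain ⟨m, rfl⟩ : ∃ m, n = m + 1 := ⟨n - 1, by omega⟩
  rw [sum_W_mul_pow fun π => Nat.lt_succ_of_le (by simpa using pexc_le π)]
  simpa using sum_pow_eq_of_add_two_mul_card_fixed (0 : Fin (m + 1))
    (fun π => by simpa using pexc_add_two_mul_card_fixed π) x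
end
end
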